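/- Let ρ₁, ρ₂, ρ₃ be density matrices of the same dimension d, and write Fᵢⱼ = F(ρᵢ; ρⱼ) for the fidelity. Then F₁₂ + F₁₃ + F₂₃ ≤ 1 + 2 √(F₁₂ F₁₃ F₂₃). -/

import Mathlib

open scoped Classical

open Matrix ComplexOrder

/-- The positive semidefinite square root of a matrix: the unique PSD square root
when the matrix is PSD, and `0` otherwise. -/
noncomputable def msqrt {n : Type*} [Fintype n] [DecidableEq n]
    (A : Matrix n n ℂ) : Matrix n n ℂ :=
  if h : A.PosSemidef then
    (h.1.eigenvectorUnitary : Matrix n n ℂ) * diagonal ((↑) ∘ (√·) ∘ h.1.eigenvalues) *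
      (star h.1.eigenvectorUnitary : Matrix n n ℂ) else 0

/-- Fidelity between two states: `F(ρ₁; ρ₂) = (tr √(√ρ₁ · ρ₂ · √ρ₁))²`. -/
noncomputable def fidelity {n : Type*} [Fintype n] [DecidableEq n]
    (ρ₁ ρ₂ : Matrix n n ℂ) : ℝ :=
  ((msqrt (msqrt ρ₁ * ρ₂ * msqrt ρ₁)).trace).re ^ 2

/-!
By Uhlmann's theorem, `√F(ρ, σ) = tr |√σ √ρ| = max_U |tr (√ρ √σ U)|` over unitaries `U`, which
follows from a singular value decomposition. For the Hilbert–Schmidt inner product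
`⟪X, Y⟫ = tr (Xᴴ Y)` the matrices `√ρ`, `√σ U`, `√τ V` are unit vectors; choosing `U`, `V` with
`⟪√σ U, √ρ⟫ = √F(ρ, σ)` and `⟪√τ V, √ρ⟫ = √F(ρ, τ)`, and using `|⟪√σ U, √τ V⟫| ≤ √F(σ, τ)`, the
triangle inequality for angles between vectors becomes the triangle inequality for the Bures
angle `arccos √F`. Finally, for angles with `|A - B| ≤ C ≤ A + B ≤ π` we have
`cos (A + B) ≤ cos C ≤ cos (A - B)`, and `(cos C - cos (A + B)) (cos (A - B) - cos C)` equals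
`1 + 2 cos A cos B cos C - cos² A - cos² B - cos² C`.
-/

open scoped MatrixOrder InnerProductSpace

theorem arccos_le_arccos_add_arccos {E : Type*} [NormedAddCommGroup E] [InnerProductSpace ℂ E]
    {u v w : E} (hu : ‖u‖ = 1) (hv : ‖v‖ = 1) (hw : ‖w‖ = 1) {a b c : ℝ}
    (ha : a ≤ (⟪v, u⟫_ℂ).re) (hb : b ≤ (⟪u, w⟫_ℂ).re) (hc : (⟪v, w⟫_ℂ).re ≤ c) :
    Real.arccos c ≤ Real.arccos a + Real.arccos b := by
  -- angles are taken in the underlying real space, where `⟪x, y⟫_ℝ = re ⟪x, y⟫_ℂ`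
  let _ := InnerProductSpace.complexToReal (G := E)
  have hangle : ∀ {x y : E}, ‖x‖ = 1 → ‖y‖ = 1 →
      InnerProductGeometry.angle x y = Real.arccos (⟪x, y⟫_ℂ).re := by
    intro x y hx hy
    rw [InnerProductGeometry.angle, hx, hy, mul_one, div_one]
    rfl
  calc Real.arccos c ≤ InnerProductGeometry.angle v w := by
        rw [hangle hv hw]; exact Real.arccos_le_arccos hc
    _ ≤ InnerProductGeometry.angle v u + InnerProductGeometry.angle u w :=
        InnerProductGeometry.angle_le_angle_add_angle v u w
    _ ≤ Real.arccos a + Real.arccos b := by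
        rw [hangle hv hu, hangle hu hw]
        exact add_le_add (Real.arccos_le_arccos ha) (Real.arccos_le_arccos hb)

theorem cos_sq_add_cos_sq_add_cos_sq_le {A B C : ℝ} (hAB : A + B ≤ Real.pi) (hC : |A - B| ≤ C)
    (hC' : C ≤ A + B) :
    Real.cos A ^ 2 + Real.cos B ^ 2 + Real.cos C ^ 2 ≤
      1 + 2 * (Real.cos A * Real.cos B * Real.cos C) := by
  have h₁ : Real.cos (A + B) ≤ Real.cos C :=
    Real.cos_le_cos_of_nonneg_of_le_pi ((abs_nonneg _).trans hC) hAB hC'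
  have h₂ : Real.cos C ≤ Real.cos (A - B) := by
    rw [← Real.cos_abs (A - B)]
    exact Real.cos_le_cos_of_nonneg_of_le_pi (abs_nonneg _) (hC'.trans hAB) hC
  rw [Real.cos_add] at h₁
  rw [Real.cos_sub] at h₂
  have hsin : Real.sin A ^ 2 * Real.sin B ^ 2 = (1 - Real.cos A ^ 2) * (1 - Real.cos B ^ 2) := by
    rw [Real.sin_sq, Real.sin_sq]
  nlinarith [mul_nonneg (sub_nonneg.2 h₁) (sub_nonneg.2 h₂)]

namespace Matrix

variable {n : Type*} [Fintype n]

theorem inner_toLp_col (Y : Matrix n n ℂ) (i j : n) :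
    ⟪WithLp.toLp 2 (Yᵀ i), WithLp.toLp 2 (Yᵀ j)⟫_ℂ = (Yᴴ * Y) i j := by
  simp [EuclideanSpace.inner_toLp_toLp, dotProduct, mul_apply, mul_comm]

theorem inner_toLp_vec (X Y : Matrix n n ℂ) :
    ⟪WithLp.toLp 2 X.vec, WithLp.toLp 2 Y.vec⟫_ℂ = (Xᴴ * Y).trace := by
  rw [EuclideanSpace.inner_toLp_toLp, dotProduct_comm, star_vec_dotProduct_vec]

variable [DecidableEq n]

theorem msqrt_eq_cfcSqrt {A : Matrix n n ℂ} (hA : A.PosSemidef) : msqrt A = CFC.sqrt A := by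
  rw [msqrt, dif_pos hA, CFC.sqrt_eq_cfc, cfc_nnreal_eq_real _ A, hA.1.cfc_eq, IsHermitian.cfc,
    Unitary.conjStarAlgAut_apply]
  congr 3
  funext i
  simp [hA.eigenvalues_nonneg i]

theorem posSemidef_msqrt {A : Matrix n n ℂ} (hA : A.PosSemidef) : (msqrt A).PosSemidef := by
  rw [msqrt_eq_cfcSqrt hA]
  exact (CFC.sqrt_nonneg A).posSemidef

theorem isHermitian_msqrt (A : Matrix n n ℂ) : (msqrt A).IsHermitian := by
  by_cases hA : A.PosSemidef
  · exact (posSemidef_msqrt hA).1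
  · simp [msqrt, hA]

theorem msqrt_mul_msqrt {A : Matrix n n ℂ} (hA : A.PosSemidef) : msqrt A * msqrt A = A := by
  rw [msqrt_eq_cfcSqrt hA]
  exact CFC.sqrt_mul_sqrt_self A hA.nonneg

theorem msqrt_mul_self {B : Matrix n n ℂ} (hB : B.PosSemidef) : msqrt (B * B) = B := by
  have hBB : (B * B).PosSemidef := by
    simpa [hB.1.eq] using posSemidef_conjTranspose_mul_self B
  rw [msqrt_eq_cfcSqrt hBB]
  exact CFC.sqrt_mul_self B hB.nonneg

theorem exists_unitary_eq_mul_diagonal {Y : Matrix n n ℂ} {σ : n → ℝ}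
    (hY : Yᴴ * Y = diagonal fun i => ((σ i ^ 2 : ℝ) : ℂ)) :
    ∃ W ∈ unitaryGroup n ℂ, Y = W * diagonal fun i => (σ i : ℂ) := by
  -- the normalized nonzero columns of `Y` are orthonormal; `W` completes them to a basis
  let u : n → EuclideanSpace ℂ n := fun j => (σ j : ℂ)⁻¹ • WithLp.toLp 2 (Yᵀ j)
  have hu : Orthonormal ℂ (({j | σ j ≠ 0} : Set n).domRestrict u) := by
    rw [orthonormal_iff_ite]
    rintro ⟨i, hi⟩ ⟨j, hj⟩
    simp only [Set.domRestrict_apply, u, inner_smul_left, inner_smul_right, inner_toLp_col, hY,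
      diagonal_apply, Subtype.mk.injEq, map_inv₀, Complex.conj_ofReal]
    split_ifs with hij
    · subst hij
      have : (σ i : ℂ) ≠ 0 := by exact_mod_cast hi
      push_cast
      field_simp
    · simp
  obtain ⟨b, hb⟩ := hu.exists_orthonormalBasis_extension_of_card_eq (by simp)
  refine ⟨(EuclideanSpace.basisFun n ℂ).toBasis.toMatrix b.toBasis,
    (EuclideanSpace.basisFun n ℂ).toMatrix_orthonormalBasis_mem_unitary b, ?_⟩
  ext i j
  rw [mul_diagonal]
  by_cases hj : σ j = 0
  · have hcol : WithLp.toLp 2 (Yᵀ j) = 0 := by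
      rw [← inner_self_eq_zero (𝕜 := ℂ), inner_toLp_col, hY, diagonal_apply_eq, hj]
      simp
    simpa [hj] using congrFun (congrArg WithLp.ofLp hcol) i
  · have hσ : (σ j : ℂ) ≠ 0 := by exact_mod_cast hj
    change Y i j = b j i * σ j
    rw [hb j hj]
    simp only [u, PiLp.smul_apply, transpose_apply, smul_eq_mul]
    field_simp

theorem exists_svd (X : Matrix n n ℂ) :
    ∃ W ∈ unitaryGroup n ℂ, ∃ V ∈ unitaryGroup n ℂ, ∃ σ : n → ℝ, (∀ i, 0 ≤ σ i) ∧
      X = W * diagonal (fun i => (σ i : ℂ)) * star V := by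
  have hH := posSemidef_conjTranspose_mul_self X
  let V : Matrix n n ℂ := hH.1.eigenvectorUnitary
  have hV : V ∈ unitaryGroup n ℂ := hH.1.eigenvectorUnitary.2
  let σ : n → ℝ := fun i => √(hH.1.eigenvalues i)
  have hXV : (X * V)ᴴ * (X * V) = diagonal fun i => ((σ i ^ 2 : ℝ) : ℂ) := by
    have hdiag := hH.1.conjStarAlgAut_star_eigenvectorUnitary
    rw [Unitary.conjStarAlgAut_star_apply] at hdiag
    calc (X * V)ᴴ * (X * V) = star V * (Xᴴ * X) * V := by
          rw [conjTranspose_mul, ← star_eq_conjTranspose V]; simp only [Matrix.mul_assoc]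
      _ = _ := hdiag
      _ = _ := by simp [σ, Function.comp_def, Real.sq_sqrt (hH.eigenvalues_nonneg _)]
  obtain ⟨W, hW, hY⟩ := exists_unitary_eq_mul_diagonal hXV
  refine ⟨W, hW, V, hV, σ, fun i => Real.sqrt_nonneg _, ?_⟩
  rw [← hY, Matrix.mul_assoc, Unitary.mul_star_self_of_mem hV, Matrix.mul_one]

noncomputable def traceNorm (X : Matrix n n ℂ) : ℝ :=
  (msqrt (Xᴴ * X)).trace.re

theorem traceNorm_nonneg (X : Matrix n n ℂ) : 0 ≤ traceNorm X :=
  (Complex.le_def.mp (posSemidef_msqrt (posSemidef_conjTranspose_mul_self X)).trace_nonneg).1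

theorem trace_unitary_conj {U : Matrix n n ℂ} (hU : U ∈ unitaryGroup n ℂ) (A : Matrix n n ℂ) :
    (U * A * star U).trace = A.trace := by
  rw [trace_mul_cycle, Unitary.star_mul_self_of_mem hU, Matrix.one_mul]

theorem traceNorm_svd {W V : Matrix n n ℂ} (hW : W ∈ unitaryGroup n ℂ)
    (hV : V ∈ unitaryGroup n ℂ) {σ : n → ℝ} (hσ : ∀ i, 0 ≤ σ i) :
    traceNorm (W * diagonal (fun i => (σ i : ℂ)) * star V) = ∑ i, σ i := by
  set D : Matrix n n ℂ := diagonal fun i => (σ i : ℂ)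
  have hD : D.PosSemidef := PosSemidef.diagonal fun i => Complex.zero_le_real.mpr (hσ i)
  have hDs : star D = D := hD.1.eq
  have hP : (V * D * star V).PosSemidef := hD.mul_mul_conjTranspose_same V
  have hsq : (W * D * star V)ᴴ * (W * D * star V) = (V * D * star V) * (V * D * star V) := by
    simp only [← star_eq_conjTranspose, star_mul, star_star, hDs, Matrix.mul_assoc]
    rw [← Matrix.mul_assoc (star W), Unitary.star_mul_self_of_mem hW, Matrix.one_mul,
      ← Matrix.mul_assoc (star V) V, Unitary.star_mul_self_of_mem hV, Matrix.one_mul]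
  rw [traceNorm, hsq, msqrt_mul_self hP, trace_unitary_conj hV,
    trace_diagonal, ← Complex.ofReal_sum, Complex.ofReal_re]

theorem exists_mem_unitaryGroup_trace_mul_eq_traceNorm (X : Matrix n n ℂ) :
    ∃ U ∈ unitaryGroup n ℂ, (X * U).trace = traceNorm X := by
  obtain ⟨W, hW, V, hV, σ, hσ, rfl⟩ := exists_svd X
  refine ⟨V * star W, Submonoid.mul_mem _ hV (Unitary.star_mem hW), ?_⟩
  have hXU : W * diagonal (fun i => (σ i : ℂ)) * star V * (V * star W) =
      W * diagonal (fun i => (σ i : ℂ)) * star W := by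
    simp only [Matrix.mul_assoc, ← Matrix.mul_assoc (star V), Unitary.star_mul_self_of_mem hV,
      Matrix.one_mul]
  rw [hXU, trace_unitary_conj hW, traceNorm_svd hW hV hσ, trace_diagonal, Complex.ofReal_sum]

theorem norm_trace_mul_le_traceNorm (X : Matrix n n ℂ) {U : Matrix n n ℂ}
    (hU : U ∈ unitaryGroup n ℂ) : ‖(X * U).trace‖ ≤ traceNorm X := by
  obtain ⟨W, hW, V, hV, σ, hσ, rfl⟩ := exists_svd X
  set M := star V * U * W
  have hM : M ∈ unitaryGroup n ℂ :=
    Submonoid.mul_mem _ (Submonoid.mul_mem _ (Unitary.star_mem hV) hU) hW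
  have htr : (W * diagonal (fun i => (σ i : ℂ)) * star V * U).trace =
      ∑ i, (σ i : ℂ) * M i i := by
    rw [Matrix.mul_assoc _ (star V), trace_mul_comm, ← Matrix.mul_assoc, trace_mul_comm]
    simp only [trace, diag_apply, diagonal_mul, M]
  rw [htr, traceNorm_svd hW hV hσ]
  refine (norm_sum_le _ _).trans (Finset.sum_le_sum fun i _ => ?_)
  rw [norm_mul, Complex.norm_real, Real.norm_of_nonneg (hσ i)]
  exact mul_le_of_le_one_right (hσ i) (entry_norm_bound_of_unitary hM i i)

theorem traceNorm_conjTranspose (X : Matrix n n ℂ) : traceNorm Xᴴ = traceNorm X := by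
  obtain ⟨W, hW, V, hV, σ, hσ, rfl⟩ := exists_svd X
  have hXH : (W * diagonal (fun i => (σ i : ℂ)) * star V)ᴴ =
      V * diagonal (fun i => (σ i : ℂ)) * star W := by
    have hDs : star (diagonal fun i => (σ i : ℂ)) = diagonal fun i => (σ i : ℂ) := by
      simp [star_eq_conjTranspose, diagonal_conjTranspose]
    simp only [← star_eq_conjTranspose, star_mul, star_star, hDs, Matrix.mul_assoc]
  rw [hXH, traceNorm_svd hW hV hσ, traceNorm_svd hV hW hσ]

end Matrix

section Fidelity

variable {n : Type*} [Fintype n] [DecidableEq n]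

theorem fidelity_nonneg (ρ σ : Matrix n n ℂ) : 0 ≤ fidelity ρ σ := sq_nonneg _

theorem sqrt_fidelity_eq_traceNorm (ρ : Matrix n n ℂ) {σ : Matrix n n ℂ} (hσ : σ.PosSemidef) :
    √(fidelity ρ σ) = traceNorm (msqrt σ * msqrt ρ) := by
  have hX : msqrt ρ * σ * msqrt ρ = (msqrt σ * msqrt ρ)ᴴ * (msqrt σ * msqrt ρ) := by
    rw [conjTranspose_mul, (isHermitian_msqrt ρ).eq, (isHermitian_msqrt σ).eq, ← Matrix.mul_assoc,
      Matrix.mul_assoc (msqrt ρ) (msqrt σ), msqrt_mul_msqrt hσ]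
  rw [fidelity, hX]
  exact Real.sqrt_sq (traceNorm_nonneg _)

theorem fidelity_comm {ρ σ : Matrix n n ℂ} (hρ : ρ.PosSemidef) (hσ : σ.PosSemidef) :
    fidelity ρ σ = fidelity σ ρ := by
  rw [← Real.sq_sqrt (fidelity_nonneg ρ σ), ← Real.sq_sqrt (fidelity_nonneg σ ρ),
    sqrt_fidelity_eq_traceNorm ρ hσ, sqrt_fidelity_eq_traceNorm σ hρ, ← traceNorm_conjTranspose,
    conjTranspose_mul, (isHermitian_msqrt ρ).eq, (isHermitian_msqrt σ).eq]

theorem norm_toLp_vec_msqrt_mul {ρ : Matrix n n ℂ} (hρ : ρ.PosSemidef) (hρt : ρ.trace = 1)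
    {U : Matrix n n ℂ} (hU : U ∈ unitaryGroup n ℂ) : ‖WithLp.toLp 2 (msqrt ρ * U).vec‖ = 1 := by
  have hsq : (msqrt ρ * U)ᴴ * (msqrt ρ * U) = star U * ρ * U := by
    rw [conjTranspose_mul, (isHermitian_msqrt ρ).eq, ← star_eq_conjTranspose,
      Matrix.mul_assoc (star U), ← Matrix.mul_assoc (msqrt ρ), msqrt_mul_msqrt hρ, Matrix.mul_assoc]
  rw [@norm_eq_sqrt_re_inner ℂ, inner_toLp_vec, hsq, trace_mul_cycle,
    Unitary.mul_star_self_of_mem hU, Matrix.one_mul, hρt]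
  simp

theorem exists_inner_toLp_vec_eq_sqrt_fidelity (ρ : Matrix n n ℂ) {σ : Matrix n n ℂ}
    (hσ : σ.PosSemidef) : ∃ U ∈ unitaryGroup n ℂ,
      ⟪WithLp.toLp 2 (msqrt σ * U).vec, WithLp.toLp 2 (msqrt ρ).vec⟫_ℂ = √(fidelity ρ σ) := by
  obtain ⟨U, hU, htr⟩ := exists_mem_unitaryGroup_trace_mul_eq_traceNorm (msqrt σ * msqrt ρ)
  refine ⟨star U, Unitary.star_mem hU, ?_⟩
  rw [inner_toLp_vec, sqrt_fidelity_eq_traceNorm ρ hσ, ← htr, conjTranspose_mul,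
    (isHermitian_msqrt σ).eq, ← star_eq_conjTranspose, star_star, Matrix.mul_assoc,
    trace_mul_comm]

theorem norm_inner_toLp_vec_le_sqrt_fidelity {ρ σ : Matrix n n ℂ} (hρ : ρ.PosSemidef)
    {U V : Matrix n n ℂ} (hU : U ∈ unitaryGroup n ℂ) (hV : V ∈ unitaryGroup n ℂ) :
    ‖⟪WithLp.toLp 2 (msqrt ρ * U).vec, WithLp.toLp 2 (msqrt σ * V).vec⟫_ℂ‖ ≤
      √(fidelity σ ρ) := by
  have htr : ((msqrt ρ * U)ᴴ * (msqrt σ * V)).trace =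
      (msqrt ρ * msqrt σ * (V * star U)).trace := by
    rw [conjTranspose_mul, (isHermitian_msqrt ρ).eq, ← star_eq_conjTranspose, Matrix.mul_assoc,
      trace_mul_comm]
    simp only [Matrix.mul_assoc]
  rw [inner_toLp_vec, htr, sqrt_fidelity_eq_traceNorm σ hρ]
  exact norm_trace_mul_le_traceNorm _ (Submonoid.mul_mem _ hV (Unitary.star_mem hU))

noncomputable def buresAngle (ρ σ : Matrix n n ℂ) : ℝ :=
  Real.arccos √(fidelity ρ σ)

theorem buresAngle_comm {ρ σ : Matrix n n ℂ} (hρ : ρ.PosSemidef) (hσ : σ.PosSemidef) :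
    buresAngle ρ σ = buresAngle σ ρ := by
  rw [buresAngle, buresAngle, fidelity_comm hρ hσ]

theorem buresAngle_le_pi_div_two (ρ σ : Matrix n n ℂ) : buresAngle ρ σ ≤ Real.pi / 2 :=
  Real.arccos_le_pi_div_two.mpr (Real.sqrt_nonneg _)

theorem sqrt_fidelity_le_one {ρ σ : Matrix n n ℂ} (hρ : ρ.PosSemidef) (hρt : ρ.trace = 1)
    (hσ : σ.PosSemidef) (hσt : σ.trace = 1) : √(fidelity ρ σ) ≤ 1 := by
  obtain ⟨U, hU, hinner⟩ := exists_inner_toLp_vec_eq_sqrt_fidelity ρ hσ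
  have hcs := norm_inner_le_norm (𝕜 := ℂ) (WithLp.toLp 2 (msqrt σ * U).vec)
    (WithLp.toLp 2 (msqrt ρ).vec)
  rwa [hinner, Complex.norm_real, Real.norm_of_nonneg (Real.sqrt_nonneg _),
    norm_toLp_vec_msqrt_mul hσ hσt hU, ← Matrix.mul_one (msqrt ρ),
    norm_toLp_vec_msqrt_mul hρ hρt (one_mem _), mul_one] at hcs

theorem cos_buresAngle {ρ σ : Matrix n n ℂ} (hρ : ρ.PosSemidef) (hρt : ρ.trace = 1)
    (hσ : σ.PosSemidef) (hσt : σ.trace = 1) : Real.cos (buresAngle ρ σ) = √(fidelity ρ σ) :=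
  Real.cos_arccos (by linarith [Real.sqrt_nonneg (fidelity ρ σ)])
    (sqrt_fidelity_le_one hρ hρt hσ hσt)

theorem buresAngle_triangle {ρ σ τ : Matrix n n ℂ} (hρ : ρ.PosSemidef) (hρt : ρ.trace = 1)
    (hσ : σ.PosSemidef) (hσt : σ.trace = 1) (hτ : τ.PosSemidef) (hτt : τ.trace = 1) :
    buresAngle σ τ ≤ buresAngle σ ρ + buresAngle ρ τ := by
  obtain ⟨U, hU, hσρ⟩ := exists_inner_toLp_vec_eq_sqrt_fidelity ρ hσ
  obtain ⟨V, hV, hτρ⟩ := exists_inner_toLp_vec_eq_sqrt_fidelity ρ hτ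
  have hρ1 : ‖WithLp.toLp 2 (msqrt ρ).vec‖ = 1 := by
    simpa using norm_toLp_vec_msqrt_mul hρ hρt (one_mem _)
  rw [buresAngle, buresAngle, buresAngle, fidelity_comm hσ hρ, fidelity_comm hσ hτ]
  refine arccos_le_arccos_add_arccos hρ1 (norm_toLp_vec_msqrt_mul hσ hσt hU)
    (norm_toLp_vec_msqrt_mul hτ hτt hV) (by rw [hσρ, Complex.ofReal_re])
    (by rw [← inner_conj_symm, hτρ, Complex.conj_ofReal, Complex.ofReal_re]) ?_
  exact (Complex.re_le_norm _).trans (norm_inner_toLp_vec_le_sqrt_fidelity hσ hU hV)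

end Fidelity

/-- For any three density matrices,
`F₁₂ + F₁₃ + F₂₃ ≤ 1 + 2 √(F₁₂ F₁₃ F₂₃)`. -/
theorem fidelity_triple_inequality {d : ℕ}
    {ρ₁ ρ₂ ρ₃ : Matrix (Fin d) (Fin d) ℂ}
    (h₁ : ρ₁.PosSemidef) (h₁t : ρ₁.trace = 1)
    (h₂ : ρ₂.PosSemidef) (h₂t : ρ₂.trace = 1)
    (h₃ : ρ₃.PosSemidef) (h₃t : ρ₃.trace = 1) :
    fidelity ρ₁ ρ₂ + fidelity ρ₁ ρ₃ + fidelity ρ₂ ρ₃ ≤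
      1 + 2 * Real.sqrt (fidelity ρ₁ ρ₂ * fidelity ρ₁ ρ₃ * fidelity ρ₂ ρ₃) := by
  have h₂₃ := buresAngle_triangle h₁ h₁t h₂ h₂t h₃ h₃t
  have h₁₃ := buresAngle_triangle h₂ h₂t h₁ h₁t h₃ h₃t
  have h₁₂ := buresAngle_triangle h₃ h₃t h₁ h₁t h₂ h₂t
  rw [buresAngle_comm h₂ h₁] at h₂₃
  rw [buresAngle_comm h₃ h₂] at h₁₂
  have key := cos_sq_add_cos_sq_add_cos_sq_le
    (by linarith [buresAngle_le_pi_div_two ρ₁ ρ₂, buresAngle_le_pi_div_two ρ₁ ρ₃])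
    (abs_sub_le_iff.mpr ⟨by linarith, by linarith⟩) h₂₃
  rw [cos_buresAngle h₁ h₁t h₂ h₂t, cos_buresAngle h₁ h₁t h₃ h₃t, cos_buresAngle h₂ h₂t h₃ h₃t,
    Real.sq_sqrt (fidelity_nonneg _ _), Real.sq_sqrt (fidelity_nonneg _ _),
    Real.sq_sqrt (fidelity_nonneg _ _), ← Real.sqrt_mul (fidelity_nonneg _ _),
    ← Real.sqrt_mul (mul_nonneg (fidelity_nonneg _ _) (fidelity_nonneg _ _))] at key
  exact key
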